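/- arXiv:1904.09547 — 2 statements merged into one kernel-verified Lean document; each statement's English description precedes it below -/
import Mathlib

section
/- Let (X,T) be a topological dynamical system, μ ∈ M(X,T), f ∈ L²(μ). If there exists a strictly increasing sequence A = {a_i} ⊆ ℕ such that f is μ-A-equicontinuous, then f is rigid: there exists a strictly increasing sequence (n_k) with f∘T^{n_k} → f in L²(μ). -/
/-! The family `f ∘ T^[a n]` splits into finitely many classes of small `L²` diameter. Truncating
at a level `C` costs uniformly little, since every `f ∘ T^[a n]` has the distribution of `f`; on a
compact set `K` of almost full measure the truncated family is uniformly equicontinuous and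
bounded, so, as in Arzelà–Ascoli, its values at the points of a finite net of `K` determine it up
to a small uniform error, while `Kᶜ` contributes little. By pigeonhole one class contains indices
`n < m` with `a m - a n` as large as we like, and as `T` preserves `μ`,
`‖f ∘ T^[a m - a n] - f‖₂ = ‖f ∘ T^[a m] - f ∘ T^[a n]‖₂` is small. -/

open MeasureTheory Filter Topology Set ProbabilityTheory
open scoped ENNReal NNReal
universe u

theorem Metric.uniformEquicontinuousOn_iff {ι α β : Type*} [PseudoMetricSpace α]
    [PseudoMetricSpace β] {F : ι → β → α} {S : Set β} :
    UniformEquicontinuousOn F S ↔ ∀ ε > 0, ∃ δ > 0, ∀ x ∈ S, ∀ y ∈ S, dist x y < δ →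
      ∀ i, dist (F i x) (F i y) < ε := by
  rw [(uniformity_basis_dist.inf_principal (S ×ˢ S)).uniformEquicontinuousOn_iff
    uniformity_basis_dist]
  simp only [mem_inter_iff, mem_ofPred_eq, mem_prod]
  grind

theorem UniformContinuous.comp_uniformEquicontinuousOn {ι α β γ : Type*} [UniformSpace α]
    [UniformSpace β] [UniformSpace γ] {φ : α → γ} (hφ : UniformContinuous φ)
    {F : ι → β → α} {S : Set β} (hF : UniformEquicontinuousOn F S) :
    UniformEquicontinuousOn (fun i => φ ∘ F i) S := by
  rw [uniformEquicontinuousOn_iff_uniformContinuousOn] at hF ⊢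
  exact (UniformFun.postcomp_uniformContinuous hφ).comp_uniformContinuousOn hF

noncomputable def truncate (C : ℝ≥0) (y : ℝ) : ℝ := projIcc (-C : ℝ) C (neg_le_self C.2) y

lemma abs_truncate_le (C : ℝ≥0) (y : ℝ) : |truncate C y| ≤ C :=
  abs_le.2 (projIcc (-C : ℝ) C _ y).2

lemma lipschitzWith_truncate (C : ℝ≥0) : LipschitzWith 1 (truncate C) := by
  have := (LipschitzWith.subtype_val _).comp (LipschitzWith.projIcc (neg_le_self C.2))
  rwa [one_mul] at this

theorem UniformEquicontinuousOn.exists_finite_discretization {ι : Type*} {X : Type u}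
    [PseudoMetricSpace X] {F : ι → X → ℝ} {K : Set X} (hF : UniformEquicontinuousOn F K)
    (hK : TotallyBounded K) {C : ℝ} (hC : ∀ i, ∀ x ∈ K, |F i x| ≤ C) {ε : ℝ} (hε : 0 < ε) :
    ∃ (β : Type u) (_ : Finite β) (D : ι → β), ∀ i j, D i = D j → ∀ x ∈ K,
      |F i x - F j x| < ε := by
  set e := ε / 3
  have he0 : 0 < e := by positivity
  obtain ⟨δ, hδ, hFδ⟩ := Metric.uniformEquicontinuousOn_iff.1 hF e he0
  obtain ⟨t, htK, htfin, hKt⟩ := Metric.finite_approx_of_totallyBounded hK δ hδ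
  have := htfin.to_subtype
  have hfloor : ∀ i (q : t), ⌊F i q / e⌋ ∈ Icc ⌊-C / e⌋ ⌊C / e⌋ := fun i q =>
    have hq := abs_le.1 (hC i q (htK q.2))
    ⟨Int.floor_mono (by gcongr; exact hq.1), Int.floor_mono (by gcongr; exact hq.2)⟩
  refine ⟨t → Icc ⌊-C / e⌋ ⌊C / e⌋, inferInstance, fun i q => ⟨_, hfloor i q⟩,
    fun i j hij x hx => ?_⟩
  obtain ⟨q, hq, hxq⟩ := mem_iUnion₂.1 (hKt hx)
  have hij_q : |F i q - F j q| < e := by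
    have := Int.abs_sub_lt_one_of_floor_eq_floor (congrArg Subtype.val (congrFun hij ⟨q, hq⟩))
    rwa [← sub_div, abs_div, abs_of_pos he0, div_lt_one he0] at this
  have hx_q : ∀ k, |F k x - F k q| < e := fun k => by
    simpa [Real.dist_eq] using hFδ x hx q (htK hq) (Metric.mem_ball.1 hxq) k
  calc |F i x - F j x| ≤ |F i x - F i q| + |F i q - F j q| + |F j q - F j x| := by
        linarith [abs_sub_le (F i x) (F i q) (F j x), abs_sub_le (F i q) (F j q) (F j x)]
    _ < e + e + e := by
        gcongr
        · exact hx_q i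
        · rw [abs_sub_comm]; exact hx_q j
    _ = ε := by ring

section
variable {X : Type*} [MeasurableSpace X] {μ : Measure X} {p : ℝ≥0∞}

lemma eLpNorm_sub_truncate_le (C : ℝ≥0) (f : X → ℝ) :
    eLpNorm (fun x => f x - truncate C (f x)) p μ ≤
      eLpNorm ({x | C ≤ ‖f x‖₊}.indicator f) p μ := by
  refine eLpNorm_mono fun x => ?_
  have hC := C.2
  simp only [indicator_apply, mem_ofPred_eq, truncate, coe_projIcc, Real.norm_eq_abs,
    ← NNReal.coe_le_coe, coe_nnnorm]
  split_ifs with hy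
  · rcases le_abs'.mp hy with hy | hy
    · rw [min_eq_right (by linarith), max_eq_left hy, abs_of_nonpos (by linarith),
        abs_of_nonpos (by linarith)]
      linarith
    · rw [min_eq_left hy, max_eq_right (by linarith), abs_of_nonneg (by linarith),
        abs_of_nonneg (by linarith)]
      linarith
  · rw [not_le, abs_lt] at hy
    rw [min_eq_right hy.2.le, max_eq_right hy.1.le, sub_self, abs_zero]

lemma prob_compl_le_of_ofReal_one_sub_lt [IsProbabilityMeasure μ] {K : Set X}
    (hK : MeasurableSet K) {τ : ℝ} (h : ENNReal.ofReal (1 - τ) < μ K) :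
    μ Kᶜ ≤ ENNReal.ofReal τ := by
  rw [prob_compl_eq_one_sub hK, tsub_le_iff_right]
  calc 1 = ENNReal.ofReal (τ + (1 - τ)) := by simp
    _ ≤ ENNReal.ofReal τ + ENNReal.ofReal (1 - τ) := ENNReal.ofReal_add_le
    _ ≤ ENNReal.ofReal τ + μ K := by gcongr

lemma eLpNorm_le_ofReal_add_eLpNorm_indicator_compl [IsProbabilityMeasure μ] (hp : 1 ≤ p)
    {u : X → ℝ} {K : Set X} (hK : MeasurableSet K) {a b : ℝ} (ha : 0 ≤ a)
    (hua : ∀ x ∈ K, |u x| ≤ a) (hub : ∀ x, |u x| ≤ b) :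
    eLpNorm u p μ ≤ ENNReal.ofReal a + eLpNorm (Kᶜ.indicator fun _ => b) p μ := by
  calc eLpNorm u p μ ≤ eLpNorm (fun x => a + Kᶜ.indicator (fun _ => b) x) p μ := by
        refine eLpNorm_mono_real fun x => ?_
        by_cases hx : x ∈ K
        · simpa [hx] using hua x hx
        · simpa [hx] using (hub x).trans (le_add_of_nonneg_left ha)
    _ ≤ eLpNorm (fun _ => a) p μ + eLpNorm (Kᶜ.indicator fun _ => b) p μ :=
        eLpNorm_add_le aestronglyMeasurable_const
          (aestronglyMeasurable_const.indicator hK.compl) hp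
    _ ≤ ENNReal.ofReal a + eLpNorm (Kᶜ.indicator fun _ => b) p μ := by
        gcongr
        simpa using eLpNorm_le_of_ae_bound (μ := μ) (p := p)
          (ae_of_all μ fun _ => (Real.norm_of_nonneg ha).le)

end

/-- `f` is μ-A-equicontinuous when the family `n ↦ f ∘ T^[a n]` has this property. -/
def MeasureEquicontinuous {ι X β : Type*} [UniformSpace X] [UniformSpace β] [MeasurableSpace X]
    (μ : Measure X) (F : ι → X → β) : Prop :=
  ∀ τ > (0 : ℝ), ∃ K, IsCompact K ∧ ENNReal.ofReal (1 - τ) < μ K ∧ UniformEquicontinuousOn F K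

theorem MeasureEquicontinuous.exists_finite_discretization {ι : Type*} {X : Type u}
    [MetricSpace X] [MeasurableSpace X] [OpensMeasurableSpace X] {μ : Measure X}
    [IsProbabilityMeasure μ] {p : ℝ≥0∞} {F : ι → X → ℝ} (hF : MeasureEquicontinuous μ F)
    (hUI : UniformIntegrable F p μ) (hp : 1 ≤ p) (hp' : p ≠ ∞) {ε : ℝ} (hε : 0 < ε) :
    ∃ (β : Type u) (_ : Finite β) (D : ι → β), ∀ i j, D i = D j →
      eLpNorm (F i - F j) p μ ≤ ENNReal.ofReal ε := by
  set e := ε / 4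
  have he0 : 0 < e := by positivity
  obtain ⟨C, hC⟩ := hUI.spec (zero_lt_one.trans_le hp).ne' hp' he0
  set G : ι → X → ℝ := fun i => truncate C ∘ F i
  have hFG : ∀ i, eLpNorm (F i - G i) p μ ≤ ENNReal.ofReal e := fun i =>
    (eLpNorm_sub_truncate_le C (F i)).trans (hC i)
  obtain ⟨η, hη, hηC⟩ :=
    (memLp_const (μ := μ) (p := p) (2 * C : ℝ)).eLpNorm_indicator_le hp hp' he0
  obtain ⟨K, hK, hμK, hFK⟩ := hF η hη
  have hKc : μ Kᶜ ≤ ENNReal.ofReal η := prob_compl_le_of_ofReal_one_sub_lt hK.measurableSet hμK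
  have hGK : UniformEquicontinuousOn G K :=
    (lipschitzWith_truncate C).uniformContinuous.comp_uniformEquicontinuousOn hFK
  obtain ⟨β, _, D, hD⟩ := hGK.exists_finite_discretization hK.totallyBounded
    (fun i x _ => abs_truncate_le C (F i x)) he0
  refine ⟨β, ‹_›, D, fun i j hij => ?_⟩
  have hGij : eLpNorm (G i - G j) p μ ≤ ENNReal.ofReal e + ENNReal.ofReal e := by
    refine (eLpNorm_le_ofReal_add_eLpNorm_indicator_compl hp hK.measurableSet he0.le
      (fun x hx => (hD i j hij x hx).le) (b := 2 * C) fun x => ?_).trans ?_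
    · calc |G i x - G j x| ≤ |G i x| + |G j x| := abs_sub _ _
        _ ≤ C + C := add_le_add (abs_truncate_le _ _) (abs_truncate_le _ _)
        _ = 2 * C := by ring
    · gcongr
      exact hηC _ hK.measurableSet.compl hKc
  have hFm := hUI.1
  have hGm : ∀ k, AEStronglyMeasurable (G k) μ := fun k =>
    (lipschitzWith_truncate C).continuous.comp_aestronglyMeasurable (hFm k)
  calc eLpNorm (F i - F j) p μ = eLpNorm ((F i - G i) + (G i - G j) - (F j - G j)) p μ := by
        congr 1; abel
    _ ≤ eLpNorm (F i - G i) p μ + eLpNorm (G i - G j) p μ + eLpNorm (F j - G j) p μ :=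
        (eLpNorm_sub_le (((hFm i).sub (hGm i)).add ((hGm i).sub (hGm j)))
          ((hFm j).sub (hGm j)) hp).trans
          (by gcongr; exact eLpNorm_add_le ((hFm i).sub (hGm i)) ((hGm i).sub (hGm j)) hp)
    _ ≤ ENNReal.ofReal e + (ENNReal.ofReal e + ENNReal.ofReal e) + ENNReal.ofReal e := by
        gcongr <;> apply hFG
    _ = ENNReal.ofReal ε := by
        rw [← ENNReal.ofReal_add he0.le he0.le, ← ENNReal.ofReal_add he0.le (by positivity),
          ← ENNReal.ofReal_add (by positivity) he0.le]
        congr 1; ring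

theorem MeasureTheory.MeasurePreserving.identDistrib_comp {X E : Type*} [MeasurableSpace X]
    [MeasurableSpace E] {μ : Measure X} {T : X → X} (hT : MeasurePreserving T μ μ) {f : X → E}
    (hf : AEMeasurable f μ) : IdentDistrib (f ∘ T) f μ μ := by
  have hf' : AEMeasurable f (μ.map T) := by rwa [hT.map_eq]
  exact ⟨hf'.comp_aemeasurable hT.aemeasurable, hf, by
    rw [← AEMeasurable.map_map_of_aemeasurable hf' hT.aemeasurable, hT.map_eq]⟩

theorem MeasureTheory.MeasurePreserving.frequently_eLpNorm_comp_iterate_sub_le {X E β : Type*}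
    [MeasurableSpace X] [NormedAddCommGroup E] [Finite β] {μ : Measure X} {p : ℝ≥0∞}
    {T : X → X} (hT : MeasurePreserving T μ μ) {f : X → E} (hf : AEStronglyMeasurable f μ)
    {a : ℕ → ℕ} (ha : StrictMono a) (D : ℕ → β) {ε : ℝ≥0∞}
    (hD : ∀ m n, D m = D n → eLpNorm (fun x => f (T^[a m] x) - f (T^[a n] x)) p μ ≤ ε) :
    ∃ᶠ t in atTop, eLpNorm (fun x => f (T^[t] x) - f x) p μ ≤ ε := by
  obtain ⟨c, hc⟩ := Finite.exists_infinite_fiber D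
  have hfib : (D ⁻¹' {c}).Infinite := Set.infinite_coe_iff.1 hc
  obtain ⟨n, hn⟩ := hfib.nonempty
  refine frequently_atTop.2 fun b => ?_
  obtain ⟨m, hm, hmn⟩ := hfib.exists_gt (a n + b)
  have hanm : a n + b < a m := hmn.trans_le (ha.id_le m)
  refine ⟨a m - a n, by omega, ?_⟩
  have hcomp : (fun x => f (T^[a m - a n] x) - f x) ∘ T^[a n] =
      fun x => f (T^[a m] x) - f (T^[a n] x) := by
    funext x
    rw [Function.comp_apply, ← Function.iterate_add_apply, Nat.sub_add_cancel (by omega)]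
  rw [← eLpNorm_comp_measurePreserving (g := fun x => f (T^[a m - a n] x) - f x)
    ((hf.comp_measurePreserving (hT.iterate _)).sub hf) (hT.iterate (a n)), hcomp]
  exact hD m n (hm.trans hn.symm)

theorem ENNReal.exists_strictMono_tendsto_zero_of_frequently {u : ℕ → ℝ≥0∞}
    (h : ∀ ε > (0 : ℝ), ∃ᶠ t in atTop, u t ≤ ENNReal.ofReal ε) :
    ∃ t : ℕ → ℕ, StrictMono t ∧ Tendsto (u ∘ t) atTop (𝓝 0) := by
  refine MapClusterPt.tendsto_subseq ?_
  rw [ENNReal.nhds_zero_basis.mapClusterPt_iff_frequently]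
  intro ε hε
  obtain ⟨r, -, hr0, hrε⟩ := ENNReal.lt_iff_exists_real_btwn.1 hε
  exact (h r (ENNReal.ofReal_pos.1 hr0)).mono fun t ht => ht.trans_lt hrε

theorem stmt8_general {X : Type*} [MetricSpace X] [MeasurableSpace X]
    [BorelSpace X] (μ : Measure X) [IsProbabilityMeasure μ] (T : X ≃ₜ X)
    (hT : MeasurePreserving T μ μ) (f : X → ℝ) (hf : MemLp f 2 μ)
    (a : ℕ → ℕ) (ha : StrictMono a)
    (heq : ∀ τ > (0 : ℝ), ∃ K : Set X, IsCompact K ∧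
      μ K > ENNReal.ofReal (1 - τ) ∧ ∀ ε > (0 : ℝ), ∃ δ > (0 : ℝ),
      ∀ x ∈ K, ∀ y ∈ K, dist x y < δ →
        ∀ n : ℕ, |f ((⇑T)^[a n] x) - f ((⇑T)^[a n] y)| < ε) :
    ∃ t : ℕ → ℕ, StrictMono t ∧
      Tendsto (fun k => eLpNorm (fun x => f ((⇑T)^[t k] x) - f x) 2 μ)
        atTop (𝓝 0) := by
  set F : ℕ → X → ℝ := fun n x => f ((⇑T)^[a n] x)
  have hid : ∀ n, IdentDistrib (fun x => f ((⇑T)^[n] x)) f μ μ := fun n =>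
    (hT.iterate n).identDistrib_comp hf.1.aemeasurable
  have hUI : UniformIntegrable F 2 μ :=
    MemLp.uniformIntegrable_of_identDistrib (j := 0) one_le_two ENNReal.ofNat_ne_top
      ((hid (a 0)).memLp_iff.2 hf) fun n => (hid (a n)).trans (hid (a 0)).symm
  have hF : MeasureEquicontinuous μ F := fun τ hτ => by
    obtain ⟨K, hK, hμK, hKF⟩ := heq τ hτ
    exact ⟨K, hK, hμK, Metric.uniformEquicontinuousOn_iff.2 (by simpa [Real.dist_eq] using hKF)⟩
  refine ENNReal.exists_strictMono_tendsto_zero_of_frequently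
    (u := fun t => eLpNorm (fun x => f ((⇑T)^[t] x) - f x) 2 μ) fun ε hε => ?_
  obtain ⟨β, _, D, hD⟩ := hF.exists_finite_discretization hUI one_le_two ENNReal.ofNat_ne_top hε
  exact hT.frequently_eLpNorm_comp_iterate_sub_le hf.1 ha D hD

theorem stmt8 {X : Type*} [MetricSpace X] [CompactSpace X] [MeasurableSpace X]
    [BorelSpace X] (μ : Measure X) [IsProbabilityMeasure μ] (T : X ≃ₜ X)
    (hT : MeasurePreserving T μ μ) (f : X → ℝ) (hf : MemLp f 2 μ)
    (a : ℕ → ℕ) (ha : StrictMono a)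
    (heq : ∀ τ > (0 : ℝ), ∃ K : Set X, IsCompact K ∧
      μ K > ENNReal.ofReal (1 - τ) ∧ ∀ ε > (0 : ℝ), ∃ δ > (0 : ℝ),
      ∀ x ∈ K, ∀ y ∈ K, dist x y < δ →
        ∀ n : ℕ, |f ((⇑T)^[a n] x) - f ((⇑T)^[a n] y)| < ε) :
    ∃ t : ℕ → ℕ, StrictMono t ∧
      Tendsto (fun k => eLpNorm (fun x => f ((⇑T)^[t k] x) - f x) 2 μ)
        atTop (𝓝 0) :=
  stmt8_general μ T hT f hf a ha heq
end

section
/- Let (X,T) be a topological dynamical system with metric d ≤ 1, μ ∈ M(X,T), and A = {a_i} a strictly increasing sequence with upper density D̄(A) > 0. If (X,T) is μ-A-mean-equicontinuous, then the family {(x,y) ↦ d(T^{a_n}x, T^{a_n}y) : n ∈ ℕ} is pre-compact in L¹(μ×μ). -/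
/-!
Write `f_t (x, y) = d(T^t x, T^t y)`. Since `T` preserves `μ`, the `L¹(μ × μ)` distance between
`f_{s+u}` and `f_{t+u}` equals that between `f_s` and `f_t`, so it suffices to find an `L` such
that every `f_t` is `ε`-close to one of `f_0, …, f_L`.

Pick a compact `K` of measure close to `1` on which mean equicontinuity holds and assign to each
`x ∈ K`, measurably, a centre `c x` among finitely many points of `K` close to `x`. Averaged over
`n`, `d(T^{a_n} x, T^{a_n} (c x))` is small, so by reverse Fatou its integral `e (a_n)` is small
for all `n` outside a set of small upper density. For the remaining times `f_{a_n}` is determined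
up to `ε` by the finitely many points `T^{a_n} z`, `z` a centre, and colouring by a finite net
yields a set `B` of times of positive upper density on which the `f_b` are pairwise `ε`-close.
By shift invariance every difference `b - b'` of `B` then has `f_{b - b'}` close to `f_0`, and
the positive differences of a set of positive upper density, together with `0`, form a syndetic
set.
-/

open MeasureTheory Filter Topology

/-- `B ⊆ ℕ` has positive upper density `D̄(B) = limsup |B ∩ [0, N)| / N`. -/
def HasPosUpperDensity (B : Set ℕ) : Prop :=
  ∃ β > (0 : ℝ), ∃ᶠ N in atTop, β * N ≤ (Set.Iio N ∩ B).ncard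

theorem Set.finite_Iio_inter (B : Set ℕ) (N : ℕ) : (Set.Iio N ∩ B).Finite :=
  (Set.finite_Iio N).inter_of_left B

open Classical in
theorem hasPosUpperDensity_of_limsup_pos {B : Set ℕ}
    (h : (0 : ℝ) < limsup (fun N : ℕ =>
      (((Finset.range N).filter (fun t => t ∈ B)).card : ℝ) / N) atTop) :
    HasPosUpperDensity B := by
  have hcard (N : ℕ) :
      ((Finset.range N).filter (fun t => t ∈ B)).card = (Set.Iio N ∩ B).ncard := by
    rw [← Set.ncard_coe_finset]; congr 1; ext; simp
  simp only [hcard] at h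
  refine ⟨_, half_pos h, ?_⟩
  have hcobdd : IsCoboundedUnder (· ≤ ·) atTop
      (fun N : ℕ => ((Set.Iio N ∩ B).ncard : ℝ) / N) :=
    isBoundedUnder_of ⟨0, fun N => by positivity⟩ |>.isCoboundedUnder_le
  refine (frequently_lt_of_lt_limsup hcobdd (half_lt_self h)).mono fun N hN => ?_
  rcases N.eq_zero_or_pos with rfl | hN0
  · simp
  · exact (le_div_iff₀ (by exact_mod_cast hN0)).1 hN.le

theorem ncard_Iio_inter_image_le {a : ℕ → ℕ} (ha : StrictMono a) (S : Set ℕ) (N : ℕ) :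
    (Set.Iio N ∩ a '' S).ncard ≤ (Set.Iio N ∩ S).ncard := by
  refine (Set.ncard_le_ncard ?_ ((Set.finite_Iio_inter S N).image a)).trans
    (Set.ncard_image_le (Set.finite_Iio_inter S N))
  rintro _ ⟨htN, n, hn, rfl⟩
  exact ⟨n, ⟨ha.le_apply.trans_lt htN, hn⟩, rfl⟩

theorem hasPosUpperDensity_sdiff {B E : Set ℕ} {β : ℝ} (hβ : 0 < β)
    (hB : ∃ᶠ N in atTop, β * N ≤ (Set.Iio N ∩ B).ncard)
    (hE : ∀ᶠ N in atTop, ((Set.Iio N ∩ E).ncard : ℝ) ≤ β / 2 * N) :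
    HasPosUpperDensity (B \ E) := by
  refine ⟨β / 2, half_pos hβ, (hB.and_eventually hE).mono fun N ⟨hBN, hEN⟩ => ?_⟩
  have hsub : Set.Iio N ∩ B ⊆ (Set.Iio N ∩ (B \ E)) ∪ (Set.Iio N ∩ E) := by
    intro t; simp only [Set.mem_union, Set.mem_inter_iff, Set.mem_sdiff]; tauto
  have hcard : ((Set.Iio N ∩ B).ncard : ℝ) ≤
      (Set.Iio N ∩ (B \ E)).ncard + (Set.Iio N ∩ E).ncard := by
    exact_mod_cast (Set.ncard_le_ncard hsub ((Set.finite_Iio_inter _ N).union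
      (Set.finite_Iio_inter _ N))).trans (Set.ncard_union_le _ _)
  linarith

theorem HasPosUpperDensity.exists_inter {ι : Type*} {B : Set ℕ} (hB : HasPosUpperDensity B)
    (I : Finset ι) (S : ι → Set ℕ) (hBS : B ⊆ ⋃ i ∈ I, S i) :
    ∃ i ∈ I, HasPosUpperDensity (B ∩ S i) := by
  obtain ⟨β, hβ, hfreq⟩ := hB
  by_contra! hsmall
  set β' := β / (I.card + 1) with hβ'
  have hev : ∀ᶠ N in atTop, ∀ i ∈ I, ((Set.Iio N ∩ (B ∩ S i)).ncard : ℝ) < β' * N := by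
    refine I.eventually_all.2 fun i hi => ?_
    have := hsmall i hi
    simp only [HasPosUpperDensity, not_exists, not_and, not_frequently, not_le] at this
    exact this β' (by positivity)
  obtain ⟨N, hBN, hsmallN, hN⟩ :=
    (hfreq.and_eventually (hev.and (eventually_gt_atTop 0))).exists
  have hsub : Set.Iio N ∩ B ⊆ ⋃ i ∈ I, Set.Iio N ∩ (B ∩ S i) := by
    rintro t ⟨htN, htB⟩
    obtain ⟨i, hi, hti⟩ := Set.mem_iUnion₂.1 (hBS htB)
    exact Set.mem_iUnion₂.2 ⟨i, hi, htN, htB, hti⟩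
  have hcard : ((Set.Iio N ∩ B).ncard : ℝ) ≤
      ∑ i ∈ I, ((Set.Iio N ∩ (B ∩ S i)).ncard : ℝ) := by
    exact_mod_cast (Set.ncard_le_ncard hsub (I.finite_toSet.biUnion fun i _ =>
      Set.finite_Iio_inter _ N)).trans (I.set_ncard_biUnion_le _)
  have hsum : ∑ i ∈ I, ((Set.Iio N ∩ (B ∩ S i)).ncard : ℝ) ≤ I.card * (β' * N) := by
    simpa using Finset.sum_le_sum fun i hi => (hsmallN i hi).le
  have hI : (I.card : ℝ) * β' < β := by
    rw [hβ', mul_div_assoc', div_lt_iff₀ (by positivity)]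
    nlinarith
  have hN' : (0 : ℝ) < N := by exact_mod_cast hN
  nlinarith

theorem HasPosUpperDensity.exists_subset_dist_lt {Y : Type*} [PseudoMetricSpace Y]
    [CompactSpace Y] {B : Set ℕ} (hB : HasPosUpperDensity B) (v : ℕ → Y) {θ : ℝ} (hθ : 0 < θ) :
    ∃ B' ⊆ B, HasPosUpperDensity B' ∧ ∀ s ∈ B', ∀ t ∈ B', dist (v s) (v t) < 2 * θ := by
  obtain ⟨W, -, hWfin, hW⟩ := finite_cover_balls_of_compact (isCompact_univ (X := Y)) hθ
  obtain ⟨w, -, hBw⟩ := hB.exists_inter hWfin.toFinset (fun w => v ⁻¹' Metric.ball w θ)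
    fun t _ => by simpa using hW (Set.mem_univ (v t))
  refine ⟨_, Set.inter_subset_left, hBw, fun s hs t ht => ?_⟩
  have hsw := Metric.mem_ball.1 hs.2
  have htw := Metric.mem_ball.1 ht.2
  exact (dist_triangle_right _ _ w).trans_lt (by linarith)

-- `u (i + 1)` is a witness that `L = u i` fails: it is no `k + r` with `r ≤ u i`, `k ∈ insert 0 D`.
theorem exists_strictMono_sub_notMem {D : Set ℕ}
    (h : ¬ ∃ L, ∀ t, ∃ r ≤ L, ∃ k ∈ insert 0 D, t = k + r) :
    ∃ u : ℕ → ℕ, StrictMono u ∧ ∀ i j, i < j → u j - u i ∉ D := by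
  push Not at h
  choose next hnext using h
  have hlt (L : ℕ) : L < next L := by
    by_contra! hle
    exact hnext L (next L) hle 0 (Set.mem_insert 0 D) (zero_add _).symm
  set u : ℕ → ℕ := fun i => next^[i] 0
  have hu_succ (i : ℕ) : u (i + 1) = next (u i) := Function.iterate_succ_apply' next i 0
  have hu : StrictMono u := strictMono_nat_of_lt_succ fun i => hu_succ i ▸ hlt (u i)
  refine ⟨u, hu, fun i j hij hD => ?_⟩
  obtain ⟨j, rfl⟩ : ∃ j', j = j' + 1 := ⟨j - 1, by omega⟩
  have hij' : u i ≤ u j := hu.monotone (by omega)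
  have hgt : u i < u (j + 1) := hu hij
  exact hnext (u j) (u i) hij' _ (Set.mem_insert_of_mem 0 hD) (by rw [← hu_succ]; omega)

-- The translates `u i + (B ∩ [0, N))`, `i < Q`, are pairwise disjoint subsets of `[0, N + u Q)`.
theorem mul_ncard_le_of_sub_mem {B D : Set ℕ} (hBD : ∀ b ∈ B, ∀ b' ∈ B, b' < b → b - b' ∈ D)
    {u : ℕ → ℕ} (hu : StrictMono u) (huD : ∀ i j, i < j → u j - u i ∉ D) (Q N : ℕ) :
    Q * (Set.Iio N ∩ B).ncard ≤ N + u Q := by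
  have hne {i j b b'} (hb : b ∈ B) (hb' : b' ∈ B) (hij : i < j) : b + u i ≠ b' + u j := by
    intro heq
    have hlt : u i < u j := hu hij
    have hsub : b - b' = u j - u i := by omega
    exact huD i j hij (hsub ▸ hBD b hb b' hb' (by omega))
  have hinj : Set.InjOn (fun p : ℕ × ℕ => p.2 + u p.1) (Set.Iio Q ×ˢ (Set.Iio N ∩ B)) := by
    rintro ⟨i, b⟩ ⟨-, -, hb⟩ ⟨j, b'⟩ ⟨-, -, hb'⟩ heq
    dsimp only at heq
    rcases lt_trichotomy i j with hij | rfl | hij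
    · exact absurd heq (hne hb hb' hij)
    · simp only [Prod.mk.injEq, true_and]; omega
    · exact absurd heq.symm (hne hb' hb hij)
  have hmaps : ∀ p ∈ Set.Iio Q ×ˢ (Set.Iio N ∩ B), p.2 + u p.1 ∈ Set.Iio (N + u Q) := by
    rintro ⟨i, b⟩ ⟨hi, hb, -⟩
    have : u i < u Q := hu hi
    simp only [Set.mem_Iio] at hb ⊢
    omega
  simpa [Set.ncard_prod, Set.ncard_Iio_nat] using
    Set.ncard_le_ncard_of_injOn _ hmaps hinj (Set.finite_Iio _)

theorem HasPosUpperDensity.exists_add_mem_insert_zero {B D : Set ℕ} (hB : HasPosUpperDensity B)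
    (hBD : ∀ b ∈ B, ∀ b' ∈ B, b' < b → b - b' ∈ D) :
    ∃ L, ∀ t, ∃ r ≤ L, ∃ k ∈ insert 0 D, t = k + r := by
  by_contra h
  obtain ⟨u, hu, huD⟩ := exists_strictMono_sub_notMem h
  obtain ⟨β, hβ, hfreq⟩ := hB
  set Q := ⌈2 / β⌉₊
  obtain ⟨N, hN, hNQ⟩ := (hfreq.and_eventually (eventually_gt_atTop (u Q))).exists
  have hcount : (Q : ℝ) * (Set.Iio N ∩ B).ncard ≤ N + u Q := by
    exact_mod_cast mul_ncard_le_of_sub_mem hBD hu huD Q N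
  have hQ : 2 ≤ Q * β := (div_le_iff₀ hβ).1 (Nat.le_ceil _)
  have hNQ' : (u Q : ℝ) < N := by exact_mod_cast hNQ
  nlinarith [(Nat.cast_nonneg Q : (0 : ℝ) ≤ Q)]

theorem eventually_integral_lt_of_forall_eventually_le {α : Type*} [MeasurableSpace α]
    {μ : Measure α} [IsProbabilityMeasure μ] {u : ℕ → α → ℝ} {C ε ε' : ℝ}
    (hmeas : ∀ N, Measurable (u N)) (hnonneg : ∀ N x, 0 ≤ u N x) (hle : ∀ N x, u N x ≤ C)
    (hu : ∀ x, ∀ᶠ N in atTop, u N x ≤ ε) (hεε' : ε < ε') :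
    ∀ᶠ N in atTop, ∫ x, u N x ∂μ < ε' := by
  have hε'pos : 0 < ε' := by
    obtain ⟨x⟩ := nonempty_of_isProbabilityMeasure μ
    obtain ⟨N, hN⟩ := (hu x).exists
    linarith [hnonneg N x]
  have hfatou := limsup_lintegral_le (μ := μ) (fun _ => ENNReal.ofReal C)
    (fun N => (hmeas N).ennreal_ofReal)
    (fun N => ae_of_all _ fun x => ENNReal.ofReal_le_ofReal (hle N x)) (by simp)
  have hpointwise (x : α) :
      limsup (fun N => ENNReal.ofReal (u N x)) atTop ≤ ENNReal.ofReal ε :=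
    limsup_le_of_le (by isBoundedDefault) ((hu x).mono fun N hN => ENNReal.ofReal_le_ofReal hN)
  have hlt : limsup (fun N => ∫⁻ x, ENNReal.ofReal (u N x) ∂μ) atTop < ENNReal.ofReal ε' :=
    calc _ ≤ ∫⁻ _, ENNReal.ofReal ε ∂μ := hfatou.trans (lintegral_mono hpointwise)
      _ < ENNReal.ofReal ε' := by simpa [ENNReal.ofReal_lt_ofReal_iff'] using ⟨hεε', hε'pos⟩
  refine (eventually_lt_of_limsup_lt hlt).mono fun N hN => ?_
  have hint : Integrable (u N) μ := Integrable.of_bound (hmeas N).aestronglyMeasurable C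
    (ae_of_all _ fun x => by rw [Real.norm_of_nonneg (hnonneg N x)]; exact hle N x)
  rw [← ofReal_integral_eq_lintegral_ofReal hint (ae_of_all _ (hnonneg N))] at hN
  exact (ENNReal.ofReal_lt_ofReal_iff hε'pos).1 hN

theorem mul_ncard_Iio_inter_le_sum {f : ℕ → ℝ} (hf : ∀ n, 0 ≤ f n) (θ : ℝ) (N : ℕ) :
    θ * (Set.Iio N ∩ {n | θ ≤ f n}).ncard ≤ ∑ n ∈ Finset.range N, f n := by
  have hset : Set.Iio N ∩ {n | θ ≤ f n} = ↑((Finset.range N).filter fun n => θ ≤ f n) := by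
    ext; simp
  rw [hset, Set.ncard_coe_finset, mul_comm, ← nsmul_eq_mul]
  exact (Finset.card_nsmul_le_sum _ _ _ fun n hn => (Finset.mem_filter.1 hn).2).trans
    (Finset.sum_le_sum_of_subset_of_nonneg (Finset.filter_subset _ _) fun n _ _ => hf n)

theorem integral_prod_const_add_add {α : Type*} [MeasurableSpace α] {μ : Measure α}
    [IsProbabilityMeasure μ] {f : α → ℝ} (hf : Integrable f μ) (b : ℝ) :
    ∫ p : α × α, b + (f p.1 + f p.2) ∂(μ.prod μ) = b + 2 * ∫ x, f x ∂μ := by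
  rw [integral_add (g := fun p : α × α => f p.1 + f p.2) (integrable_const _)
      ((hf.comp_fst μ).add (hf.comp_snd μ)),
    integral_add (hf.comp_fst μ) (hf.comp_snd μ), integral_fun_fst, integral_fun_snd]
  simp only [integral_const, probReal_univ, smul_eq_mul, one_mul]
  ring

theorem measureReal_compl_le_of_ofReal_lt {α : Type*} [MeasurableSpace α] {μ : Measure α}
    [IsProbabilityMeasure μ] {K : Set α} (hK : MeasurableSet K) {τ : ℝ}
    (hKμ : ENNReal.ofReal (1 - τ) < μ K) : μ.real Kᶜ ≤ τ := by
  have h := ENNReal.toReal_mono (measure_ne_top μ K) hKμ.le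
  rw [ENNReal.toReal_ofReal'] at h
  rw [probReal_compl_eq_one_sub hK]
  linarith [le_max_left (1 - τ) 0, show μ.real K = (μ K).toReal from rfl]

theorem exists_simpleFunc_mem_dist_lt {X : Type*} [PseudoMetricSpace X] [MeasurableSpace X]
    [OpensMeasurableSpace X] {K : Set X} (hK : IsCompact K) (hne : K.Nonempty) {δ : ℝ}
    (hδ : 0 < δ) : ∃ c : SimpleFunc X X, ∀ x, c x ∈ K ∧ (x ∈ K → dist x (c x) < δ) := by
  obtain ⟨t, htK, htfin, hcov⟩ := finite_cover_balls_of_compact hK hδ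
  obtain ⟨n, f, rfl⟩ := htfin.fin_embedding
  obtain ⟨x₀, hx₀⟩ := hne
  set e : ℕ → X := fun k => if h : k < n then f ⟨k, h⟩ else x₀
  have he (k : ℕ) : e k ∈ K := by
    by_cases h : k < n
    · simpa [e, h] using htK ⟨⟨k, h⟩, rfl⟩
    · simpa [e, h] using hx₀
  refine ⟨SimpleFunc.nearestPt e n, fun x => ⟨he _, fun hx => ?_⟩⟩
  obtain ⟨_, ⟨i, rfl⟩, hxi⟩ := Set.mem_iUnion₂.1 (hcov hx)
  have hnear := SimpleFunc.edist_nearestPt_le e x i.2.le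
  rw [show e i = f i by simp [e], edist_dist, edist_dist,
    ENNReal.ofReal_le_ofReal_iff dist_nonneg] at hnear
  rw [dist_comm]
  exact hnear.trans_lt (dist_comm x (f i) ▸ Metric.mem_ball.1 hxi)

theorem abs_dist_sub_dist_le {X : Type*} [PseudoMetricSpace X] (a₀ a₁ a₂ a₃ b₀ b₁ b₂ b₃ : X) :
    |dist a₀ b₀ - dist a₃ b₃| ≤
      (dist a₀ a₁ + dist b₀ b₁) + (dist a₁ a₂ + dist b₁ b₂) + (dist a₂ a₃ + dist b₂ b₃) := by
  rw [← Real.dist_eq]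
  calc _ ≤ dist (dist a₀ b₀) (dist a₁ b₁) + dist (dist a₁ b₁) (dist a₂ b₂) +
        dist (dist a₂ b₂) (dist a₃ b₃) := dist_triangle4 _ _ _ _
    _ ≤ _ := by gcongr <;> exact dist_dist_dist_le _ _ _ _

theorem dist_le_diam_univ {X : Type*} [PseudoMetricSpace X] [CompactSpace X] (x y : X) :
    dist x y ≤ Metric.diam (Set.univ : Set X) :=
  Metric.dist_le_diam_of_mem Metric.isBounded_of_compactSpace (Set.mem_univ x) (Set.mem_univ y)

section Orbit

variable {X : Type*} [MetricSpace X] {T : X → X}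

def orbitDist (T : X → X) (t : ℕ) (p : X × X) : ℝ := dist (T^[t] p.1) (T^[t] p.2)

theorem continuous_orbitDist (hT : Continuous T) (t : ℕ) : Continuous (orbitDist T t) :=
  ((hT.iterate t).comp continuous_fst).dist ((hT.iterate t).comp continuous_snd)

noncomputable def approxDefect (T : X → X) (K : Set X) (c : X → X) (t : ℕ) : X → ℝ :=
  K.indicator fun x => dist (T^[t] x) (T^[t] (c x))

theorem approxDefect_nonneg (K : Set X) (c : X → X) (t : ℕ) (x : X) :
    0 ≤ approxDefect T K c t x :=
  Set.indicator_nonneg (fun _ _ => dist_nonneg) x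

theorem abs_orbitDist_sub_le_of_mem {K : Set X} {c : X → X} {s t : ℕ} {η : ℝ}
    (hη : ∀ x, dist (T^[s] (c x)) (T^[t] (c x)) ≤ η) {x y : X} (hx : x ∈ K) (hy : y ∈ K) :
    |orbitDist T s (x, y) - orbitDist T t (x, y)| ≤ 2 * η +
      (approxDefect T K c s x + approxDefect T K c t x) +
      (approxDefect T K c s y + approxDefect T K c t y) := by
  have h := abs_dist_sub_dist_le (T^[s] x) (T^[s] (c x)) (T^[t] (c x)) (T^[t] x)
    (T^[s] y) (T^[s] (c y)) (T^[t] (c y)) (T^[t] y)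
  rw [dist_comm (T^[t] (c x)), dist_comm (T^[t] (c y))] at h
  simp only [orbitDist, approxDefect, Set.indicator_of_mem hx, Set.indicator_of_mem hy]
  linarith [hη x, hη y]

variable [CompactSpace X]

theorem abs_orbitDist_sub_le_diam (s t : ℕ) (p : X × X) :
    |orbitDist T s p - orbitDist T t p| ≤ Metric.diam (Set.univ : Set X) := by
  have hs : orbitDist T s p ≤ Metric.diam (Set.univ : Set X) := dist_le_diam_univ _ _
  have ht : orbitDist T t p ≤ Metric.diam (Set.univ : Set X) := dist_le_diam_univ _ _
  have hs0 : 0 ≤ orbitDist T s p := dist_nonneg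
  have ht0 : 0 ≤ orbitDist T t p := dist_nonneg
  exact abs_sub_le_iff.2 ⟨by linarith, by linarith⟩

theorem approxDefect_le_diam (K : Set X) (c : X → X) (t : ℕ) (x : X) :
    approxDefect T K c t x ≤ Metric.diam (Set.univ : Set X) := by
  unfold approxDefect
  by_cases hx : x ∈ K
  · simpa [hx] using dist_le_diam_univ _ _
  · simpa [hx] using Metric.diam_nonneg

variable [MeasurableSpace X] [BorelSpace X]

theorem measurable_approxDefect (hT : Continuous T) {K : Set X} (hK : MeasurableSet K)
    (c : SimpleFunc X X) (t : ℕ) : Measurable (approxDefect T K c t) :=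
  ((hT.iterate t).measurable.dist ((hT.iterate t).measurable.comp c.measurable)).indicator hK

theorem integrable_approxDefect (μ : Measure X) [IsFiniteMeasure μ] (hT : Continuous T)
    {K : Set X} (hK : MeasurableSet K) (c : SimpleFunc X X) (t : ℕ) :
    Integrable (approxDefect T K c t) μ :=
  Integrable.of_bound (measurable_approxDefect hT hK c t).aestronglyMeasurable _
    (ae_of_all _ fun x => by
      rw [Real.norm_of_nonneg (approxDefect_nonneg K c t x)]
      exact approxDefect_le_diam K c t x)

theorem memLp_orbitDist (hT : Continuous T) (ν : Measure (X × X)) [IsFiniteMeasure ν]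
    (t : ℕ) : MemLp (orbitDist T t) 1 ν :=
  MemLp.of_bound (continuous_orbitDist hT t).aestronglyMeasurable _
    (ae_of_all _ fun _ => (Real.norm_of_nonneg dist_nonneg).trans_le (dist_le_diam_univ _ _))

noncomputable def orbitDistLp (μ : Measure X) [IsFiniteMeasure μ] (hT : Continuous T)
    (t : ℕ) : Lp ℝ 1 (μ.prod μ) :=
  (memLp_orbitDist hT (μ.prod μ) t).toLp _

variable {μ : Measure X}

theorem edist_orbitDistLp [IsFiniteMeasure μ] (hT : Continuous T) (s t : ℕ) :
    edist (orbitDistLp μ hT s) (orbitDistLp μ hT t) =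
      eLpNorm (orbitDist T s - orbitDist T t) 1 (μ.prod μ) :=
  Lp.edist_toLp_toLp _ _ _ _

theorem dist_orbitDistLp [IsFiniteMeasure μ] (hT : Continuous T) (s t : ℕ) :
    dist (orbitDistLp μ hT s) (orbitDistLp μ hT t) =
      ∫ p, |orbitDist T s p - orbitDist T t p| ∂(μ.prod μ) := by
  rw [L1.dist_eq_integral_dist]
  refine integral_congr_ae ?_
  filter_upwards [(memLp_orbitDist hT (μ.prod μ) s).coeFn_toLp,
    (memLp_orbitDist hT (μ.prod μ) t).coeFn_toLp] with p hs ht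
  rw [orbitDistLp, orbitDistLp, hs, ht, Real.dist_eq]

theorem dist_orbitDistLp_add [IsFiniteMeasure μ] (hT : Continuous T)
    (hTμ : MeasurePreserving T μ μ) (s t u : ℕ) :
    dist (orbitDistLp μ hT (s + u)) (orbitDistLp μ hT (t + u)) =
      dist (orbitDistLp μ hT s) (orbitDistLp μ hT t) := by
  have hcomp (s : ℕ) : orbitDist T (s + u) = orbitDist T s ∘ Prod.map T^[u] T^[u] := by
    funext p; simp [orbitDist, Function.iterate_add_apply]
  simp only [dist_edist, edist_orbitDistLp, hcomp]
  exact congrArg ENNReal.toReal (eLpNorm_comp_measurePreserving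
    ((continuous_orbitDist hT s).sub (continuous_orbitDist hT t)).aestronglyMeasurable
    ((hTμ.iterate u).prod (hTμ.iterate u)))

theorem dist_orbitDistLp_le [IsProbabilityMeasure μ] (hT : Continuous T) {K : Set X}
    (hK : MeasurableSet K) (c : SimpleFunc X X) {s t : ℕ} {η : ℝ}
    (hη : ∀ x, dist (T^[s] (c x)) (T^[t] (c x)) ≤ η) :
    dist (orbitDistLp μ hT s) (orbitDistLp μ hT t) ≤
      2 * η + 2 * (∫ x, approxDefect T K c s x ∂μ + ∫ x, approxDefect T K c t x ∂μ +
        Metric.diam (Set.univ : Set X) * μ.real Kᶜ) := by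
  set C := Metric.diam (Set.univ : Set X)
  set φ : X → ℝ := fun x =>
    approxDefect T K c s x + approxDefect T K c t x + Kᶜ.indicator (fun _ => C) x
  have hint_defect := integrable_approxDefect μ hT hK c
  have hint_compl : Integrable (Kᶜ.indicator fun _ => C) μ :=
    (integrable_const C).indicator hK.compl
  have hint_φ : Integrable φ μ := ((hint_defect s).add (hint_defect t)).add hint_compl
  have hdefect_nonneg (x : X) : 0 ≤ approxDefect T K c s x + approxDefect T K c t x :=
    add_nonneg (approxDefect_nonneg K c s x) (approxDefect_nonneg K c t x)
  have hφ_nonneg (x : X) : 0 ≤ φ x :=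
    add_nonneg (hdefect_nonneg x) (Set.indicator_nonneg (fun _ _ => Metric.diam_nonneg) x)
  have hbound (p : X × X) : |orbitDist T s p - orbitDist T t p| ≤ 2 * η + (φ p.1 + φ p.2) := by
    obtain ⟨x, y⟩ := p
    by_cases hxy : x ∈ K ∧ y ∈ K
    · have h := abs_orbitDist_sub_le_of_mem hη hxy.1 hxy.2
      simp only [φ, Set.indicator_of_notMem (Set.notMem_compl_iff.2 hxy.1),
        Set.indicator_of_notMem (Set.notMem_compl_iff.2 hxy.2)]
      linarith
    · have hC : C ≤ φ x + φ y := by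
        rcases not_and_or.1 hxy with hx | hy
        · simp only [φ, Set.indicator_of_mem (Set.mem_compl hx)]
          linarith [hdefect_nonneg x, hφ_nonneg y]
        · simp only [φ, Set.indicator_of_mem (Set.mem_compl hy)]
          linarith [hdefect_nonneg y, hφ_nonneg x]
      linarith [abs_orbitDist_sub_le_diam (T := T) s t (x, y), dist_nonneg.trans (hη x)]
  have hint_abs : Integrable (fun p => |orbitDist T s p - orbitDist T t p|) (μ.prod μ) :=
    ((memLp_orbitDist hT _ s).integrable le_rfl).sub
      ((memLp_orbitDist hT _ t).integrable le_rfl) |>.abs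
  have hint_φ_eq : ∫ x, φ x ∂μ = ∫ x, approxDefect T K c s x ∂μ +
      ∫ x, approxDefect T K c t x ∂μ + C * μ.real Kᶜ := by
    rw [integral_add (f := fun x => approxDefect T K c s x + approxDefect T K c t x)
      ((hint_defect s).add (hint_defect t)) hint_compl, integral_add (hint_defect s)
      (hint_defect t), integral_indicator_const _ hK.compl, smul_eq_mul, mul_comm]
  rw [dist_orbitDistLp]
  calc _ ≤ ∫ p, 2 * η + (φ p.1 + φ p.2) ∂(μ.prod μ) :=
        integral_mono hint_abs
          ((integrable_const _).add ((hint_φ.comp_fst μ).add (hint_φ.comp_snd μ))) hbound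
    _ = _ := by rw [integral_prod_const_add_add hint_φ, hint_φ_eq]

theorem eventually_ncard_integral_approxDefect_ge_le [IsProbabilityMeasure μ]
    (hT : Continuous T) {K : Set X} (hK : MeasurableSet K) (c : SimpleFunc X X) (a : ℕ → ℕ)
    {θ ρ : ℝ} (hθ : 0 < θ) (hρ : 0 < ρ)
    (hmean : ∀ x ∈ K, limsup (fun N : ℕ => (1 / (N : ℝ)) *
      ∑ i ∈ Finset.range N, dist (T^[a i] x) (T^[a i] (c x))) atTop < θ * ρ / 2) :
    ∀ᶠ N in atTop,
      ((Set.Iio N ∩ {n | θ ≤ ∫ x, approxDefect T K c (a n) x ∂μ}).ncard : ℝ) ≤ ρ * N := by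
  set C := Metric.diam (Set.univ : Set X)
  set u : ℕ → X → ℝ := fun N x =>
    (1 / (N : ℝ)) * ∑ i ∈ Finset.range N, approxDefect T K c (a i) x
  have hu_nonneg (N : ℕ) (x : X) : 0 ≤ u N x :=
    mul_nonneg (by positivity) (Finset.sum_nonneg fun i _ => approxDefect_nonneg K c _ x)
  have hu_le (N : ℕ) (x : X) : u N x ≤ C := by
    have hsum : ∑ i ∈ Finset.range N, approxDefect T K c (a i) x ≤ N * C := by
      simpa using Finset.sum_le_card_nsmul (Finset.range N) _ C
        fun i _ => approxDefect_le_diam K c (a i) x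
    rcases N.eq_zero_or_pos with rfl | hN
    · simpa [u] using Metric.diam_nonneg
    · simp only [u, one_div]
      rwa [inv_mul_le_iff₀ (by exact_mod_cast hN)]
  have hu_meas (N : ℕ) : Measurable (u N) :=
    (Finset.measurable_sum _ fun i _ => measurable_approxDefect hT hK c (a i)).const_mul _
  have hu_small (x : X) : ∀ᶠ N in atTop, u N x ≤ θ * ρ / 2 := by
    by_cases hx : x ∈ K
    · have hux : (fun N => u N x) = fun N : ℕ => (1 / (N : ℝ)) *
          ∑ i ∈ Finset.range N, dist (T^[a i] x) (T^[a i] (c x)) := by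
        simp [u, approxDefect, Set.indicator_of_mem hx]
      have hlim := hmean x hx
      rw [← hux] at hlim
      exact (eventually_lt_of_limsup_lt hlim (isBoundedUnder_of ⟨C, fun N => hu_le N x⟩)).mono
        fun N hN => hN.le
    · refine Eventually.of_forall fun N => ?_
      simp only [u, approxDefect, Set.indicator_of_notMem hx, Finset.sum_const_zero, mul_zero]
      positivity
  filter_upwards [eventually_integral_lt_of_forall_eventually_le (μ := μ) hu_meas hu_nonneg
    hu_le hu_small (half_lt_self (mul_pos hθ hρ)), eventually_gt_atTop 0] with N hN hN0
  have hmarkov := mul_ncard_Iio_inter_le_sum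
    (f := fun n => ∫ x, approxDefect T K c (a n) x ∂μ)
    (fun n => integral_nonneg (approxDefect_nonneg K c (a n))) θ N
  rw [integral_const_mul, integral_finsetSum _ fun i _ => integrable_approxDefect μ hT hK c (a i),
    one_div, inv_mul_lt_iff₀ (by exact_mod_cast hN0)] at hN
  exact le_of_mul_le_mul_left (by linarith) hθ

/-- `μ`-`A`-mean equicontinuity for `A = {a₀ < a₁ < ⋯}`; the averages run over the indices `i`. -/
def MeanEquicontinuousAlong (μ : Measure X) (T : X → X) (a : ℕ → ℕ) : Prop :=
  ∀ τ > (0 : ℝ), ∃ K : Set X, IsCompact K ∧ μ K > ENNReal.ofReal (1 - τ) ∧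
    ∀ ε > (0 : ℝ), ∃ δ > (0 : ℝ), ∀ x ∈ K, ∀ y ∈ K, dist x y < δ →
      limsup (fun n : ℕ => (1 / (n : ℝ)) *
        ∑ i ∈ Finset.range n, dist (T^[a i] x) (T^[a i] y)) atTop < ε

theorem MeanEquicontinuousAlong.exists_hasPosUpperDensity_dist_le [IsProbabilityMeasure μ]
    {a : ℕ → ℕ} (hmec : MeanEquicontinuousAlong μ T a) (hT : Continuous T) (ha : StrictMono a)
    (hA : HasPosUpperDensity (Set.range a)) {ε : ℝ} (hε : 0 < ε) :
    ∃ B, HasPosUpperDensity B ∧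
      ∀ s ∈ B, ∀ t ∈ B, dist (orbitDistLp μ hT s) (orbitDistLp μ hT t) ≤ ε := by
  obtain ⟨β, hβ, hfreq⟩ := hA
  set C := Metric.diam (Set.univ : Set X)
  have hC : 0 ≤ C := Metric.diam_nonneg
  -- the error budget: `4θ` from the colouring, `4θ` from the defects, `2Cτ` from `Kᶜ`
  set θ := ε / 16 with hθ
  set τ := ε / (8 * (C + 1))
  have hCτ : C * τ ≤ ε / 8 := by
    rw [mul_div_assoc', div_le_div_iff₀ (by positivity) (by norm_num)]
    nlinarith
  obtain ⟨K, hKc, hKμ, hKeq⟩ := hmec τ (by positivity)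
  obtain ⟨δ, hδ, hδK⟩ := hKeq (θ * (β / 2) / 2) (by positivity)
  have hKm : MeasurableSet K := hKc.measurableSet
  obtain ⟨c, hc⟩ := exists_simpleFunc_mem_dist_lt hKc
    (nonempty_of_measure_ne_zero (zero_le.trans_lt hKμ).ne') hδ
  set e : ℕ → ℝ := fun t => ∫ x, approxDefect T K c t x ∂μ
  set S := {n | θ ≤ e (a n)}
  have hS := eventually_ncard_integral_approxDefect_ge_le (μ := μ) hT hKm c a (by positivity)
    (half_pos hβ) fun x hx => hδK x hx (c x) (hc x).1 ((hc x).2 hx)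
  have hgood : HasPosUpperDensity (Set.range a \ a '' S) := hasPosUpperDensity_sdiff hβ hfreq
    (hS.mono fun N hN => (Nat.cast_le.2 (ncard_Iio_inter_image_le ha S N)).trans hN)
  obtain ⟨B, hBgood, hB, hBv⟩ := hgood.exists_subset_dist_lt
    (fun t (z : c.range) => T^[t] z) (by positivity : 0 < θ)
  refine ⟨B, hB, fun s hs t ht => ?_⟩
  obtain ⟨⟨s, rfl⟩, hsS⟩ := hBgood hs
  obtain ⟨⟨t, rfl⟩, htS⟩ := hBgood ht
  have hη (x : X) : dist (T^[a s] (c x)) (T^[a t] (c x)) ≤ 2 * θ :=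
    (dist_le_pi_dist _ _ ⟨c x, c.mem_range_self x⟩).trans (hBv _ hs _ ht).le
  calc _ ≤ 2 * (2 * θ) + 2 * (e (a s) + e (a t) + C * μ.real Kᶜ) :=
        dist_orbitDistLp_le hT hKm c hη
    _ ≤ ε := by
        have hes : e (a s) < θ := not_le.1 fun h => hsS ⟨s, h, rfl⟩
        have het : e (a t) < θ := not_le.1 fun h => htS ⟨t, h, rfl⟩
        linarith [mul_le_mul_of_nonneg_left (measureReal_compl_le_of_ofReal_lt hKm hKμ) hC]

theorem totallyBounded_range_orbitDistLp [IsProbabilityMeasure μ] {a : ℕ → ℕ}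
    (hT : Continuous T) (hTμ : MeasurePreserving T μ μ) (ha : StrictMono a)
    (hA : HasPosUpperDensity (Set.range a)) (hmec : MeanEquicontinuousAlong μ T a) :
    TotallyBounded (Set.range (orbitDistLp μ hT)) := by
  refine Metric.totallyBounded_iff.2 fun ε hε => ?_
  obtain ⟨B, hB, hBε⟩ := hmec.exists_hasPosUpperDensity_dist_le hT ha hA (half_pos hε)
  obtain ⟨L, hL⟩ := hB.exists_add_mem_insert_zero
    (D := {k | dist (orbitDistLp μ hT k) (orbitDistLp μ hT 0) ≤ ε / 2}) fun b hb b' hb' hlt => by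
      rw [Set.mem_ofPred_eq, ← dist_orbitDistLp_add hT hTμ _ _ b', Nat.sub_add_cancel hlt.le,
        zero_add]
      exact hBε b hb b' hb'
  refine ⟨orbitDistLp μ hT '' Set.Iic L, (Set.finite_Iic L).image _, ?_⟩
  rintro _ ⟨t, rfl⟩
  obtain ⟨r, hr, k, hk, rfl⟩ := hL t
  refine Set.mem_biUnion ⟨r, hr, rfl⟩ (Metric.mem_ball.2 ?_)
  rcases hk with rfl | hk
  · simpa using hε
  · have hshift := dist_orbitDistLp_add hT hTμ k 0 r
    rw [zero_add] at hshift
    exact hshift ▸ hk.trans_lt (half_lt_self hε)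

end Orbit

theorem TotallyBounded.exists_finset_dist_lt {ι α : Type*} [PseudoMetricSpace α] {g : ι → α}
    (h : TotallyBounded (Set.range g)) {ε : ℝ} (hε : 0 < ε) :
    ∃ F : Finset ι, ∀ i, ∃ j ∈ F, dist (g i) (g j) < ε := by
  obtain ⟨t, hts, htfin, hcov⟩ := Metric.finite_approx_of_totallyBounded h ε hε
  rw [← Set.image_univ] at hts hcov
  obtain ⟨s, -, hsfin, hcov⟩ := Set.exists_subset_image_finite_and
    (p := fun t => g '' Set.univ ⊆ ⋃ y ∈ t, Metric.ball y ε) |>.1 ⟨t, hts, htfin, hcov⟩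
  refine ⟨hsfin.toFinset, fun i => ?_⟩
  obtain ⟨_, ⟨j, hj, rfl⟩, hij⟩ := Set.mem_iUnion₂.1 (hcov ⟨i, Set.mem_univ i, rfl⟩)
  exact ⟨j, hsfin.mem_toFinset.2 hj, hij⟩

open Classical in
theorem stmt15_general {X : Type*} [MetricSpace X] [CompactSpace X] [MeasurableSpace X]
    [BorelSpace X] (μ : Measure X) [IsProbabilityMeasure μ] (T : X ≃ₜ X)
    (hT : MeasurePreserving T μ μ)
    (a : ℕ → ℕ) (ha : StrictMono a)
    (hdens : (0 : ℝ) < limsup (fun n : ℕ =>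
      (((Finset.range n).filter (fun m => m ∈ Set.range a)).card : ℝ) / n) atTop)
    (hmec : ∀ τ > (0 : ℝ), ∃ K : Set X, IsCompact K ∧
      μ K > ENNReal.ofReal (1 - τ) ∧ ∀ ε > (0 : ℝ), ∃ δ > (0 : ℝ),
      ∀ x ∈ K, ∀ y ∈ K, dist x y < δ →
        limsup (fun n : ℕ => (1 / (n : ℝ)) *
          ∑ i ∈ Finset.range n, dist ((⇑T)^[a i] x) ((⇑T)^[a i] y)) atTop < ε) :
    ∀ ε > (0 : ℝ), ∃ F : Finset ℕ, ∀ n : ℕ, ∃ m ∈ F,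
      eLpNorm (fun p : X × X =>
          dist ((⇑T)^[a n] p.1) ((⇑T)^[a n] p.2)
            - dist ((⇑T)^[a m] p.1) ((⇑T)^[a m] p.2)) 1 (μ.prod μ)
        < ENNReal.ofReal ε := by
  intro ε hε
  have hbdd := totallyBounded_range_orbitDistLp T.continuous hT ha
    (hasPosUpperDensity_of_limsup_pos hdens) hmec
  obtain ⟨F, hF⟩ := (hbdd.subset (Set.range_comp_subset_range a _)).exists_finset_dist_lt hε
  refine ⟨F, fun n => ?_⟩
  obtain ⟨m, hm, hnm⟩ := hF n
  rw [Function.comp_apply, Function.comp_apply, ← edist_lt_ofReal, edist_orbitDistLp] at hnm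
  exact ⟨m, hm, hnm⟩

open Classical in
theorem stmt15 {X : Type*} [MetricSpace X] [CompactSpace X] [MeasurableSpace X]
    [BorelSpace X] (μ : Measure X) [IsProbabilityMeasure μ] (T : X ≃ₜ X)
    (hT : MeasurePreserving T μ μ)
    (hdle : ∀ x y : X, dist x y ≤ 1)
    (a : ℕ → ℕ) (ha : StrictMono a)
    (hdens : (0 : ℝ) < limsup (fun n : ℕ =>
      (((Finset.range n).filter (fun m => m ∈ Set.range a)).card : ℝ) / n) atTop)
    (hmec : ∀ τ > (0 : ℝ), ∃ K : Set X, IsCompact K ∧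
      μ K > ENNReal.ofReal (1 - τ) ∧ ∀ ε > (0 : ℝ), ∃ δ > (0 : ℝ),
      ∀ x ∈ K, ∀ y ∈ K, dist x y < δ →
        limsup (fun n : ℕ => (1 / (n : ℝ)) *
          ∑ i ∈ Finset.range n, dist ((⇑T)^[a i] x) ((⇑T)^[a i] y)) atTop < ε) :
    ∀ ε > (0 : ℝ), ∃ F : Finset ℕ, ∀ n : ℕ, ∃ m ∈ F,
      eLpNorm (fun p : X × X =>
          dist ((⇑T)^[a n] p.1) ((⇑T)^[a n] p.2)
            - dist ((⇑T)^[a m] p.1) ((⇑T)^[a m] p.2)) 1 (μ.prod μ)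
        < ENNReal.ofReal ε :=
  stmt15_general μ T hT a ha hdens hmec
end
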